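/- Let X be a separable metric space and ≿ a Lipschitz affine preorder on Δ₁(X). Then the cone C := {α(p − q) : α ≥ 0 and p ≿ q} is a closed subset of KR(X) in the KR-norm. More precisely, if σ = α(q − p) with α > 0 and q ≿ p fails with Lipschitz constant K (as in the Lipschitz condition), then the open ball of radius αK about σ in KR(X) is disjoint from C. -/

import Mathlib

open MeasureTheory

/-- A real-valued Lipschitz function. -/
def IsLip {X : Type*} [MetricSpace X] (f : X → ℝ) : Prop :=
  ∃ K : NNReal, LipschitzWith K f

/-- Membership in Δ₁(X). -/
def MemDelta1 {X : Type*} [MetricSpace X] [MeasurableSpace X] (p : Measure X) : Prop :=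
  IsProbabilityMeasure p ∧ ∀ f : X → ℝ, IsLip f → Integrable f p

/-- The Wasserstein 1-metric, via Kantorovich–Rubinstein duality. -/
noncomputable def W1 {X : Type*} [MetricSpace X] [MeasurableSpace X]
    (p q : Measure X) : ℝ :=
  ⨆ f : {f : X → ℝ // LipschitzWith 1 f}, |∫ x, f.1 x ∂p - ∫ x, f.1 x ∂q|

/-- The mixture (1 − λ)p + λq of two measures. -/
noncomputable def mix {X : Type*} [MeasurableSpace X] (p q : Measure X) (lam : ℝ) :
    Measure X :=
  ENNReal.ofReal (1 - lam) • p + ENNReal.ofReal lam • q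

/-- A probability measure, viewed as a signed measure. -/
noncomputable def tsm {X : Type*} [MeasurableSpace X] (p : Measure X)
    (hp : IsProbabilityMeasure p) : SignedMeasure X :=
  haveI := hp
  p.toSignedMeasure

/-- The preorder ≿ is affine on Δ₁(X). -/
def AffinePre {X : Type*} [MetricSpace X] [MeasurableSpace X]
    (R : Measure X → Measure X → Prop) : Prop :=
  ∀ p q r : Measure X, MemDelta1 p → MemDelta1 q → MemDelta1 r →
    ∀ lam : ℝ, 0 ≤ lam → lam < 1 →
      (R p q ↔ R (mix p r lam) (mix q r lam))

/-- The preorder ≿ is Lipschitz on Δ₁(X). -/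
def LipschitzPre {X : Type*} [MetricSpace X] [MeasurableSpace X]
    (R : Measure X → Measure X → Prop) : Prop :=
  ∀ p q : Measure X, MemDelta1 p → MemDelta1 q → ¬ R q p →
    ∃ K : ℝ, 0 < K ∧ ∀ p' q' : Measure X, MemDelta1 p' → MemDelta1 q' →
      ∀ lam : ℝ, 0 ≤ lam → lam < K / (K + W1 p' q') →
        ¬ R (mix q q' lam) (mix p p' lam)

/-- The cone C = {α(p − q) : α ≥ 0, p ≿ q} in KR(X). -/
def coneC {X : Type*} [MetricSpace X] [MeasurableSpace X]
    (R : Measure X → Measure X → Prop) : Set (SignedMeasure X) :=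
  {μ | ∃ α : ℝ, 0 ≤ α ∧ ∃ p q : Measure X, ∃ (hp : MemDelta1 p) (hq : MemDelta1 q),
    R p q ∧ μ = α • (tsm p hp.1 - tsm q hq.1)}


/-- Membership in KR(X). -/
def MemKR {X : Type*} [MetricSpace X] [MeasurableSpace X] (μ : SignedMeasure X) : Prop :=
  μ Set.univ = 0 ∧ ∀ f : X → ℝ, IsLip f → Integrable f μ.totalVariation

/-- The KR norm. -/
noncomputable def KRnorm {X : Type*} [MetricSpace X] [MeasurableSpace X]
    (μ : SignedMeasure X) : ℝ :=
  ⨆ f : {f : X → ℝ // LipschitzWith 1 f},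
    |∫ x, f.1 x ∂μ.toJordanDecomposition.posPart -
      ∫ x, f.1 x ∂μ.toJordanDecomposition.negPart|

set_option linter.unusedSectionVars false
set_option linter.unusedVariables false
section Aux

open scoped ENNReal
open Set

variable {X : Type*} [MetricSpace X] [MeasurableSpace X]

lemma mix_apply (p q : Measure X) (lam : ℝ) (A : Set X) :
    mix p q lam A = ENNReal.ofReal (1 - lam) * p A + ENNReal.ofReal lam * q A := by
  simp [mix]

lemma mix_zero (p q : Measure X) : mix p q 0 = p := by
  simp [mix]

lemma memDelta1_mix {p q : Measure X} (hp : MemDelta1 p) (hq : MemDelta1 q)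
    {lam : ℝ} (h0 : 0 ≤ lam) (h1 : lam ≤ 1) : MemDelta1 (mix p q lam) := by
  haveI := hp.1; haveI := hq.1
  refine ⟨⟨?_⟩, fun f hf => ?_⟩
  · rw [mix_apply]
    simp only [measure_univ, mul_one]
    rw [← ENNReal.ofReal_add (by linarith) h0]
    norm_num
  · exact ((hp.2 f hf).smul_measure ENNReal.ofReal_ne_top).add_measure
      ((hq.2 f hf).smul_measure ENNReal.ofReal_ne_top)

lemma mix_mix (m₁ m₂ m₃ : Measure X) (a b : ℝ) (ha : 0 ≤ a) :
    mix m₁ (mix m₂ m₃ b) a =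
      ENNReal.ofReal (1 - a) • m₁ + ENNReal.ofReal (a * (1 - b)) • m₂
        + ENNReal.ofReal (a * b) • m₃ := by
  rw [mix, mix, smul_add, smul_smul, smul_smul, ← ENNReal.ofReal_mul ha,
    ← ENNReal.ofReal_mul ha, add_assoc]

lemma W1_nonneg (p q : Measure X) : 0 ≤ W1 p q :=
  Real.iSup_nonneg fun _ => abs_nonneg _

lemma tsm_apply (p : Measure X) (hp : IsProbabilityMeasure p) {A : Set X}
    (hA : MeasurableSet A) : tsm p hp A = (p A).toReal := by
  haveI := hp
  exact Measure.toSignedMeasure_apply_measurable hA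

lemma jordan_apply (ν : SignedMeasure X) {A : Set X} (hA : MeasurableSet A) :
    ν A = (ν.toJordanDecomposition.posPart A).toReal
        - (ν.toJordanDecomposition.negPart A).toReal := by
  conv_lhs => rw [← ν.toSignedMeasure_toJordanDecomposition]
  exact Measure.toSignedMeasure_sub_apply hA

lemma aux_le {m1 m2 n1 n2 : Measure X} (hsing : m1 ⟂ₘ m2)
    (heq : m1 + n1 = m2 + n2) : m1 ≤ n2 := by
  obtain ⟨S, hS, h1, h2⟩ := hsing
  rw [MeasureTheory.Measure.le_iff]; intro A hA
  have e : m1 (A \ S) + n1 (A \ S) = m2 (A \ S) + n2 (A \ S) := by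
    rw [← Measure.add_apply, ← Measure.add_apply, heq]
  have hm2 : m2 (A \ S) = 0 := measure_mono_null (Set.diff_subset_compl A S) h2
  have hm1S : m1 (A ∩ S) = 0 := measure_mono_null Set.inter_subset_right h1
  calc m1 A = m1 (A ∩ S) + m1 (A \ S) := (measure_inter_add_diff A hS).symm
    _ = m1 (A \ S) := by rw [hm1S, zero_add]
    _ ≤ m1 (A \ S) + n1 (A \ S) := le_self_add
    _ = m2 (A \ S) + n2 (A \ S) := e
    _ = n2 (A \ S) := by rw [hm2, zero_add]
    _ ≤ n2 A := measure_mono Set.diff_subset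

end Aux
section Key

open scoped ENNReal

variable {X : Type*} [MetricSpace X] [MeasurableSpace X]

lemma mix_apply_toReal (p q : Measure X) [IsFiniteMeasure p] [IsFiniteMeasure q]
    {lam : ℝ} (h0 : 0 ≤ lam) (h1 : lam ≤ 1) (A : Set X) :
    ((mix p q lam) A).toReal = (1 - lam) * (p A).toReal + lam * (q A).toReal := by
  rw [mix_apply, ENNReal.toReal_add
      (ENNReal.mul_ne_top ENNReal.ofReal_ne_top (measure_ne_top _ _))
      (ENNReal.mul_ne_top ENNReal.ofReal_ne_top (measure_ne_top _ _)),
    ENNReal.toReal_mul, ENNReal.toReal_mul, ENNReal.toReal_ofReal (by linarith),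
    ENNReal.toReal_ofReal h0]

theorem key (R : Measure X → Measure X → Prop)
    (hrefl : ∀ p : Measure X, MemDelta1 p → R p p)
    (haff : AffinePre R)
    (α : ℝ) (hα : 0 < α) (p q : Measure X) (hp : MemDelta1 p) (hq : MemDelta1 q)
    (K : ℝ) (hK : 0 < K)
    (H : ∀ p' q' : Measure X, MemDelta1 p' → MemDelta1 q' →
        ∀ lam : ℝ, 0 ≤ lam → lam < K / (K + W1 p' q') →
          ¬ R (mix q q' lam) (mix p p' lam)) :
    ∀ μ ∈ coneC R, α * K ≤ KRnorm (α • (tsm q hq.1 - tsm p hp.1) - μ) := by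
  rintro μ ⟨β, hβ, p', q', hp', hq', hR', rfl⟩
  haveI := hp.1; haveI := hq.1; haveI := hp'.1; haveI := hq'.1
  set c : ℝ := α + β with hc_def
  have hc : 0 < c := by positivity
  have hc' : c ≠ 0 := ne_of_gt hc
  have hca : 0 < c + α := by linarith
  have hca' : c + α ≠ 0 := ne_of_gt hca
  set lam : ℝ := β / c with hlam_def
  have hlam0 : 0 ≤ lam := div_nonneg hβ hc.le
  have hlam1 : lam ≤ 1 := by rw [hlam_def, div_le_one hc]; linarith
  set P : Measure X := mix q q' lam with hP_def
  set Q : Measure X := mix p p' lam with hQ_def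
  have hP : MemDelta1 P := memDelta1_mix hq hq' hlam0 hlam1
  have hQ : MemDelta1 Q := memDelta1_mix hp hp' hlam0 hlam1
  haveI := hP.1; haveI := hQ.1
  set t : ℝ := c / (c + α) with ht_def
  have ht0 : 0 ≤ t := by positivity
  have ht1 : t < 1 := by rw [ht_def, div_lt_one hca]; linarith
  -- Step A : R (mix q Q t) (mix p P t)
  have hRel : R (mix q Q t) (mix p P t) := by
    rcases eq_or_lt_of_le hβ with hβ0 | hβpos
    · have hβ0 : β = 0 := hβ0.symm
      have hlam_eq : lam = 0 := by rw [hlam_def, hβ0, zero_div]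
      have hPq : P = q := by rw [hP_def, hlam_eq, mix_zero]
      have hQp : Q = p := by rw [hQ_def, hlam_eq, mix_zero]
      have ht : ENNReal.ofReal (1 - t) = ENNReal.ofReal t := by
        congr 1
        rw [ht_def, hc_def, hβ0]
        field_simp; ring
      have hmix : mix q Q t = mix p P t := by
        rw [hPq, hQp, mix, mix, ht, add_comm]
      rw [hmix]
      exact hrefl _ (memDelta1_mix hp (hPq ▸ hP) ht0 ht1.le)
    · set s : ℝ := 2 * α / (c + α) with hs_def
      have hs0 : 0 ≤ s := by positivity
      have hs1 : s < 1 := by rw [hs_def, div_lt_one hca]; linarith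
      set r : Measure X := mix p q (1/2) with hr_def
      have hr : MemDelta1 r := memDelta1_mix hp hq (by norm_num) (by norm_num)
      have e1 : 1 - t = α / (c + α) := by rw [ht_def]; field_simp; ring
      have e2 : t * (1 - lam) = α / (c + α) := by
        rw [ht_def, hlam_def, hc_def]; field_simp; ring
      have e3 : t * lam = β / (c + α) := by
        rw [ht_def, hlam_def]; field_simp
      have e4 : 1 - s = β / (c + α) := by
        rw [hs_def, hc_def]; field_simp; ring
      have e5 : s * (1 - 1/2 : ℝ) = α / (c + α) := by
        rw [hs_def]; field_simp; ring
      have e6 : s * (1/2 : ℝ) = α / (c + α) := by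
        rw [hs_def]; field_simp
      have key1 : mix q Q t = mix p' r s := by
        rw [hQ_def, mix_mix q p p' t lam ht0, hr_def, mix_mix p' p q s (1/2) hs0,
          e1, e2, e3, e4, e5, e6]
        abel
      have key2 : mix p P t = mix q' r s := by
        rw [hP_def, mix_mix p q q' t lam ht0, hr_def, mix_mix q' p q s (1/2) hs0,
          e1, e2, e3, e4, e5, e6]
        abel
      have := (haff p' q' r hp' hq' hr s hs0 hs1).mp hR'
      rwa [← key1, ← key2] at this
  -- Step B : W1 lower bound
  have htW : K / (K + W1 P Q) ≤ t := by
    by_contra hcon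
    push_neg at hcon
    exact H P Q hP hQ t ht0 hcon hRel
  have hW0 : 0 ≤ W1 P Q := W1_nonneg P Q
  have hKW : 0 < K + W1 P Q := by linarith
  have hW : K * α / c ≤ W1 P Q := by
    rw [div_le_iff₀ hKW] at htW
    rw [div_le_iff₀ hc]
    have ht' : t * (c + α) = c := by rw [ht_def]; field_simp
    nlinarith [mul_le_mul_of_nonneg_right htW hca.le]
  set ν : SignedMeasure X :=
    α • (tsm q hq.1 - tsm p hp.1) - β • (tsm p' hp'.1 - tsm q' hq'.1) with hν_def
  have hclam1 : c * (1 - lam) = α := by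
    rw [hlam_def]
    field_simp
    rw [hc_def]
    ring
  have hclam2 : c * lam = β := by rw [hlam_def]; field_simp
  have hνA : ∀ A : Set X, MeasurableSet A →
      α * ((q A).toReal - (p A).toReal) - β * ((p' A).toReal - (q' A).toReal)
        = (ν.toJordanDecomposition.posPart A).toReal
          - (ν.toJordanDecomposition.negPart A).toReal := by
    intro A hA
    have h1 := jordan_apply ν hA
    rw [hν_def, VectorMeasure.sub_apply, VectorMeasure.smul_apply, VectorMeasure.smul_apply,
      VectorMeasure.sub_apply, VectorMeasure.sub_apply,
      tsm_apply q hq.1 hA, tsm_apply p hp.1 hA,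
      tsm_apply p' hp'.1 hA, tsm_apply q' hq'.1 hA] at h1
    simpa using h1
  have hMeq : ν.toJordanDecomposition.posPart + ENNReal.ofReal c • Q
      = ν.toJordanDecomposition.negPart + ENNReal.ofReal c • P := by
    ext A hA
    have h1 := hνA A hA
    rw [Measure.add_apply, Measure.add_apply, Measure.smul_apply, Measure.smul_apply,
      smul_eq_mul, smul_eq_mul,
      ← ENNReal.toReal_eq_toReal_iff'
        (ENNReal.add_ne_top.mpr ⟨measure_ne_top _ _,
          ENNReal.mul_ne_top ENNReal.ofReal_ne_top (measure_ne_top _ _)⟩)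
        (ENNReal.add_ne_top.mpr ⟨measure_ne_top _ _,
          ENNReal.mul_ne_top ENNReal.ofReal_ne_top (measure_ne_top _ _)⟩),
      ENNReal.toReal_add (measure_ne_top _ _)
        (ENNReal.mul_ne_top ENNReal.ofReal_ne_top (measure_ne_top _ _)),
      ENNReal.toReal_add (measure_ne_top _ _)
        (ENNReal.mul_ne_top ENNReal.ofReal_ne_top (measure_ne_top _ _)),
      ENNReal.toReal_mul, ENNReal.toReal_mul, ENNReal.toReal_ofReal hc.le,
      hP_def, hQ_def, mix_apply_toReal p p' hlam0 hlam1, mix_apply_toReal q q' hlam0 hlam1]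
    linear_combination (-1 : ℝ) * h1 + ((p A).toReal - (q A).toReal) * hclam1
      + ((p' A).toReal - (q' A).toReal) * hclam2
  have hposle : ν.toJordanDecomposition.posPart ≤ ENNReal.ofReal c • P :=
    aux_le ν.toJordanDecomposition.mutuallySingular hMeq
  have hnegle : ν.toJordanDecomposition.negPart ≤ ENNReal.ofReal c • Q :=
    aux_le ν.toJordanDecomposition.mutuallySingular.symm hMeq.symm
  have hper : ∀ f : {f : X → ℝ // LipschitzWith 1 f},
      |∫ x, f.1 x ∂ν.toJordanDecomposition.posPart
        - ∫ x, f.1 x ∂ν.toJordanDecomposition.negPart|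
        = c * |∫ x, f.1 x ∂P - ∫ x, f.1 x ∂Q| := by
    intro f
    have hfl : IsLip f.1 := ⟨1, f.2⟩
    have hiP : Integrable f.1 P := hP.2 f.1 hfl
    have hiQ : Integrable f.1 Q := hQ.2 f.1 hfl
    have hicP : Integrable f.1 (ENNReal.ofReal c • P) := hiP.smul_measure ENNReal.ofReal_ne_top
    have hicQ : Integrable f.1 (ENNReal.ofReal c • Q) := hiQ.smul_measure ENNReal.ofReal_ne_top
    have hipos : Integrable f.1 ν.toJordanDecomposition.posPart := hicP.mono_measure hposle
    have hineg : Integrable f.1 ν.toJordanDecomposition.negPart := hicQ.mono_measure hnegle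
    have heq : ∫ x, f.1 x ∂(ν.toJordanDecomposition.posPart + ENNReal.ofReal c • Q)
        = ∫ x, f.1 x ∂(ν.toJordanDecomposition.negPart + ENNReal.ofReal c • P) := by
      rw [hMeq]
    rw [integral_add_measure hipos hicQ, integral_add_measure hineg hicP,
      integral_smul_measure, integral_smul_measure, ENNReal.toReal_ofReal hc.le] at heq
    have hlin : ∫ x, f.1 x ∂ν.toJordanDecomposition.posPart
        - ∫ x, f.1 x ∂ν.toJordanDecomposition.negPart
        = c * (∫ x, f.1 x ∂P - ∫ x, f.1 x ∂Q) := by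
      simp only [smul_eq_mul] at heq
      linarith
    rw [hlin, abs_mul, abs_of_nonneg hc.le]
  calc α * K = c * (K * α / c) := by field_simp
    _ ≤ c * W1 P Q := mul_le_mul_of_nonneg_left hW hc.le
    _ = ⨆ f : {f : X → ℝ // LipschitzWith 1 f}, c * |∫ x, f.1 x ∂P - ∫ x, f.1 x ∂Q| := by
        rw [W1, Real.mul_iSup_of_nonneg hc.le]
    _ = KRnorm ν := by
        rw [KRnorm]
        exact iSup_congr fun f => (hper f).symm

end Key
theorem stmt11 {X : Type*} [MetricSpace X] [TopologicalSpace.SeparableSpace X]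
    [MeasurableSpace X] [BorelSpace X]
    (R : Measure X → Measure X → Prop)
    (hrefl : ∀ p : Measure X, MemDelta1 p → R p p)
    (htrans : ∀ p q r : Measure X, MemDelta1 p → MemDelta1 q → MemDelta1 r →
      R p q → R q r → R p r)
    (haff : AffinePre R) (hlip : LipschitzPre R) :
    -- C is closed in the KR norm:
    (∀ σ : SignedMeasure X, MemKR σ → σ ∉ coneC R →
      ∃ ε : ℝ, 0 < ε ∧ ∀ μ ∈ coneC R, ε ≤ KRnorm (σ - μ)) ∧
    -- more precisely, the open ball of radius αK about σ = α(q − p) misses C: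
    (∀ (α : ℝ), 0 < α → ∀ p q : Measure X, ∀ (hp : MemDelta1 p) (hq : MemDelta1 q),
      ∀ K : ℝ, 0 < K →
        (∀ p' q' : Measure X, MemDelta1 p' → MemDelta1 q' →
          ∀ lam : ℝ, 0 ≤ lam → lam < K / (K + W1 p' q') →
            ¬ R (mix q q' lam) (mix p p' lam)) →
        ∀ μ ∈ coneC R, α * K ≤ KRnorm (α • (tsm q hq.1 - tsm p hp.1) - μ)) := by
  constructor
  · intro σ hσ hσC
    by_cases hex : ∃ p₀ : Measure X, MemDelta1 p₀
    · obtain ⟨p₀, hp₀⟩ := hex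
      have hmass : σ.toJordanDecomposition.posPart Set.univ
          = σ.toJordanDecomposition.negPart Set.univ := by
        have h0 := hσ.1
        rw [jordan_apply σ MeasurableSet.univ] at h0
        exact (ENNReal.toReal_eq_toReal_iff' (measure_ne_top _ _) (measure_ne_top _ _)).mp
          (sub_eq_zero.mp h0)
      by_cases h0 : σ.toJordanDecomposition.posPart Set.univ = 0
      · exfalso
        apply hσC
        have hp0 : σ.toJordanDecomposition.posPart = 0 :=
          MeasureTheory.Measure.measure_univ_eq_zero.mp h0
        have hn0 : σ.toJordanDecomposition.negPart = 0 :=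
          MeasureTheory.Measure.measure_univ_eq_zero.mp (hmass ▸ h0)
        have hσ0 : σ = 0 := by
          apply MeasureTheory.VectorMeasure.ext
          intro A hA
          rw [jordan_apply σ hA, hp0, hn0]
          simp
        exact ⟨0, le_refl 0, p₀, p₀, hp₀, hp₀, hrefl p₀ hp₀, by rw [hσ0, zero_smul]⟩
      · have h0' : σ.toJordanDecomposition.negPart Set.univ ≠ 0 := by
          rw [← hmass]; exact h0
        have htop : σ.toJordanDecomposition.posPart Set.univ ≠ ⊤ := measure_ne_top _ _
        have htop' : σ.toJordanDecomposition.negPart Set.univ ≠ ⊤ := measure_ne_top _ _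
        set a : ℝ := (σ.toJordanDecomposition.posPart Set.univ).toReal with ha_def
        have ha : 0 < a := ENNReal.toReal_pos h0 htop
        set u : Measure X :=
          (σ.toJordanDecomposition.posPart Set.univ)⁻¹ • σ.toJordanDecomposition.posPart
          with hu_def
        set v : Measure X :=
          (σ.toJordanDecomposition.negPart Set.univ)⁻¹ • σ.toJordanDecomposition.negPart
          with hv_def
        have huP : IsProbabilityMeasure u :=
          ⟨by rw [hu_def, Measure.smul_apply, smul_eq_mul, ENNReal.inv_mul_cancel h0 htop]⟩
        have hvP : IsProbabilityMeasure v :=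
          ⟨by rw [hv_def, Measure.smul_apply, smul_eq_mul, ENNReal.inv_mul_cancel h0' htop']⟩
        have hle_pos : σ.toJordanDecomposition.posPart ≤ σ.totalVariation :=
          Measure.le_add_right (le_refl _)
        have hle_neg : σ.toJordanDecomposition.negPart ≤ σ.totalVariation :=
          Measure.le_add_left (le_refl _)
        have hu : MemDelta1 u := ⟨huP, fun f hf =>
          ((hσ.2 f hf).mono_measure hle_pos).smul_measure (ENNReal.inv_ne_top.mpr h0)⟩
        have hv : MemDelta1 v := ⟨hvP, fun f hf =>
          ((hσ.2 f hf).mono_measure hle_neg).smul_measure (ENNReal.inv_ne_top.mpr h0')⟩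
        have hσeq : σ = a • (tsm u hu.1 - tsm v hv.1) := by
          apply MeasureTheory.VectorMeasure.ext
          intro A hA
          rw [jordan_apply σ hA, VectorMeasure.smul_apply, VectorMeasure.sub_apply,
            tsm_apply u hu.1 hA, tsm_apply v hv.1 hA, hu_def, hv_def]
          simp only [Measure.smul_apply, smul_eq_mul, ENNReal.toReal_mul, ENNReal.toReal_inv]
          rw [← hmass, ← ha_def]
          field_simp
        have hnR : ¬ R u v := fun h => hσC ⟨a, ha.le, u, v, hu, hv, h, hσeq⟩
        obtain ⟨K, hK, hH⟩ := hlip v u hv hu hnR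
        refine ⟨a * K, by positivity, fun μ hμ => ?_⟩
        rw [hσeq]
        exact key R hrefl haff a ha v u hv hu K hK hH μ hμ
    · refine ⟨1, one_pos, fun μ hμ => ?_⟩
      obtain ⟨α', -, p, q, hp, -, -, -⟩ := hμ
      exact absurd ⟨p, hp⟩ hex
  · intro α hα p q hp hq K hK H μ hμ
    exact key R hrefl haff α hα p q hp hq K hK H μ hμ
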